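/- arXiv:1507.06953 — 4 statements merged into one kernel-verified Lean document; each statement's English description precedes it below -/
import Mathlib

section
/- Let G be the output of Greedy on a permutation X of [n] with initial tree T. If G contains touch points (x_1, t_1), (x_3, t_1) and (x_2, t_2) with 1 ≤ t_1 < t_2 and x_1 < x_2 < x_3, then there is an access point (X(s), s) with x_1 ≤ X(s) ≤ x_3 and t_1 ≤ s ≤ t_2. (In other words, the 2×3 light matrix Cap, with ones in the bottom row at columns 1 and 3 and a one in the top row at column 2, is a capture gadget for Greedy: every bounding box of an occurrence of Cap in the touch matrix contains an access point.) -/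
open scoped Classical

/-! ### Geometric BST model: point sets, satisfied sets, OPT -/

/-- `r` lies in the closed axis-parallel rectangle with corners `p` and `q`. -/
def InRect {α β : Type*} [LinearOrder α] [LinearOrder β] (p q r : α × β) : Prop :=
  min p.1 q.1 ≤ r.1 ∧ r.1 ≤ max p.1 q.1 ∧ min p.2 q.2 ≤ r.2 ∧ r.2 ≤ max p.2 q.2

/-- A finite point set is arborally satisfied. -/
def Satisfied {α β : Type*} [LinearOrder α] [LinearOrder β] (P : Finset (α × β)) : Prop :=
  ∀ p ∈ P, ∀ q ∈ P, p.1 ≠ q.1 → p.2 ≠ q.2 → ∃ r ∈ P, r ≠ p ∧ r ≠ q ∧ InRect p q r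

/-- `OPT X` : minimum cardinality of an arborally satisfied superset of `X`. -/
noncomputable def OPT {α β : Type*} [LinearOrder α] [LinearOrder β] (X : Finset (α × β)) : ℕ :=
  sInf { m | ∃ Y : Finset (α × β), X ⊆ Y ∧ Satisfied Y ∧ Y.card = m }

/-! ### Permutations as functions on `[1..n]`, pattern containment -/

/-- `X` is a permutation of `[n] = {1, …, n}`. -/
def IsPermOn (n : ℕ) (X : ℕ → ℕ) : Prop :=
  Set.BijOn X (Set.Icc 1 n) (Set.Icc 1 n)

/-- `X ∈ S_n` contains the pattern `pat ∈ S_k`. -/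
def Contains (n : ℕ) (X : ℕ → ℕ) (k : ℕ) (pat : ℕ → ℕ) : Prop :=
  ∃ f : ℕ → ℕ, Set.MapsTo f (Set.Icc 1 k) (Set.Icc 1 n) ∧
    StrictMonoOn f (Set.Icc 1 k) ∧
    ∀ i ∈ Set.Icc 1 k, ∀ j ∈ Set.Icc 1 k, (pat i < pat j ↔ X (f i) < X (f j))

/-- `X ∈ S_n` avoids the pattern `pat ∈ S_k`. -/
def Avoids (n : ℕ) (X : ℕ → ℕ) (k : ℕ) (pat : ℕ → ℕ) : Prop := ¬ Contains n X k pat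

/-- The pattern (2,3,1). -/
def pat231 : ℕ → ℕ := fun i => if i = 1 then 2 else if i = 2 then 3 else if i = 3 then 1 else i

/-- The decreasing pattern (k, k-1, …, 1). -/
def patDec (k : ℕ) : ℕ → ℕ := fun i => k + 1 - i

/-- The increasing pattern (1, 2, …, k). -/
def patInc : ℕ → ℕ := id

/-- The point set `{(X t, t) : t ∈ [n]}` of a permutation of `[n]`. -/
def permPoints (n : ℕ) (X : ℕ → ℕ) : Finset (ℤ × ℤ) :=
  (Finset.Icc 1 n).image fun t => ((X t : ℤ), (t : ℤ))

/-! ### Binary search trees on `[n]` -/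

/-- Binary trees with natural-number keys. -/
inductive BTree where
  | leaf : BTree
  | node : BTree → ℕ → BTree → BTree

def BTree.keys : BTree → Finset ℕ
  | .leaf => ∅
  | .node l k r => insert k (l.keys ∪ r.keys)

def BTree.isSearch : BTree → Prop
  | .leaf => True
  | .node l k r => (∀ y ∈ l.keys, y < k) ∧ (∀ y ∈ r.keys, k < y) ∧ l.isSearch ∧ r.isSearch

/-- `T` is a binary search tree on `[n] = {1, …, n}`. -/
def IsBSTOn (T : BTree) (n : ℕ) : Prop := T.keys = Finset.Icc 1 n ∧ T.isSearch

/-- Depth of the node labeled `x` (root has depth 1; `0` if `x` is absent). -/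
def BTree.depthOf : BTree → ℕ → ℕ
  | .leaf, _ => 0
  | .node l k r, x =>
      if x = k then 1
      else max (if l.depthOf x = 0 then 0 else l.depthOf x + 1)
               (if r.depthOf x = 0 then 0 else r.depthOf x + 1)

/-- Maximum depth of a key of `[n]` in `T`. -/
def BTree.maxDepth (T : BTree) (n : ℕ) : ℕ := (Finset.Icc 1 n).sup T.depthOf

/-- The geometric encoding of the initial tree `T`:
the stack of points `(x, s)` for `-(d - d_T(x)) ≤ s ≤ 0`. -/
noncomputable def initialSet (T : BTree) (n : ℕ) : Finset (ℕ × ℤ) :=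
  (Finset.Icc 1 n).biUnion fun x =>
    (Finset.Icc (-((T.maxDepth n : ℤ) - (T.depthOf x : ℤ))) 0).image fun s => (x, s)

/-! ### Greedy (and its one-sided variants) -/

/-- `tau S b` : last time at which element `b` is touched in the point set `S`
(defaults to `0` if `b` never occurs in `S`). -/
noncomputable def tau (S : Finset (ℕ × ℤ)) (b : ℕ) : ℤ :=
  WithBot.unbotD 0 ((S.filter (fun p => p.1 = b)).image Prod.snd).max

/-- `tauAt G b t` : last time `≤ t` at which element `b` is touched in the point set `G`. -/
noncomputable def tauAt (G : Finset (ℕ × ℤ)) (b : ℕ) (t : ℤ) : ℤ :=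
  WithBot.unbotD 0 ((G.filter (fun p => p.1 = b ∧ p.2 ≤ t)).image Prod.snd).max

/-- The closed rectangle with corners `p` and `q` contains no point of `S`
other than (possibly) `p` and `q`. -/
def RectEmpty (S : Finset (ℕ × ℤ)) (p q : ℕ × ℤ) : Prop :=
  ∀ r ∈ S, InRect p q r → r = p ∨ r = q

/-- One step of (one-sided) Greedy: access element `a` at time `t`, starting from point set `S`.
`side a b` restricts which elements may be touched (`fun _ _ => True` for plain Greedy,
`fun a b => a < b` for GreedyRight, `fun a b => b < a` for GreedyLeft). -/
noncomputable def greedyStep (n : ℕ) (side : ℕ → ℕ → Prop) (S : Finset (ℕ × ℤ))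
    (a : ℕ) (t : ℤ) : Finset (ℕ × ℤ) :=
  insert (a, t) (S ∪
    ((Finset.Icc 1 n).filter (fun b => side a b ∧
        (S.filter (fun p => p.1 = b)).Nonempty ∧
        RectEmpty S (a, t) (b, tau S b))).image (fun b => (b, t)))

/-- The full output of (one-sided) Greedy on `X` at times `1, …, n`,
starting from the point set `init`. -/
noncomputable def greedyRun (n : ℕ) (side : ℕ → ℕ → Prop) (X : ℕ → ℕ)
    (init : Finset (ℕ × ℤ)) : Finset (ℕ × ℤ) :=
  (List.range n).foldl (fun S t => greedyStep n side S (X (t + 1)) ((t : ℤ) + 1)) init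

/-- Cost of Greedy on permutation `X` of `[n]` with initial tree `T`:
the number of points of the output at times `≥ 1`. -/
noncomputable def greedyCostT (T : BTree) (n : ℕ) (X : ℕ → ℕ) : ℕ :=
  ((greedyRun n (fun _ _ => True) X (initialSet T n)).filter (fun p => 1 ≤ p.2)).card

/-- Cost of Greedy on permutation `X` of `[n]` run without initial tree. -/
noncomputable def greedyCost (n : ℕ) (X : ℕ → ℕ) : ℕ :=
  (greedyRun n (fun _ _ => True) X ∅).card

/-- Cost of Signed Greedy on permutation `X` of `[n]` with initial tree `T`:
cardinality of the union of the GreedyLeft and GreedyRight outputs at times `≥ 1`. -/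
noncomputable def sgreedyCostT (T : BTree) (n : ℕ) (X : ℕ → ℕ) : ℕ :=
  ((greedyRun n (fun a b => b < a) X (initialSet T n) ∪
      greedyRun n (fun a b => a < b) X (initialSet T n)).filter (fun p => 1 ≤ p.2)).card

/-! ### Inverse Ackermann -/

/-- The inverse Ackermann function `α(n) = min {m : A(m,m) ≥ n}`. -/
noncomputable def invAck (n : ℕ) : ℕ := sInf { m | n ≤ ack m m }

/-! ### Blocks, simple permutations, `k`-decomposability -/

/-- `[a,b]` is a block of the permutation `X` of `[n]`:
a contiguous interval of positions mapped onto a contiguous interval of values. -/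
def IsBlockOf (n : ℕ) (X : ℕ → ℕ) (a b : ℕ) : Prop :=
  1 ≤ a ∧ a ≤ b ∧ b ≤ n ∧ ∃ c : ℕ, X '' Set.Icc a b = Set.Icc c (c + (b - a))

/-- A permutation of `[l]` is simple (non-decomposable): it has no block of size
strictly between `1` and `l`. -/
def IsSimplePerm (l : ℕ) (σ : ℕ → ℕ) : Prop :=
  ∀ a b : ℕ, IsBlockOf l σ a b → a = b ∨ (a = 1 ∧ b = l)

/-- The permutation of `[b - a + 1]` order-isomorphic to the restriction of `X`
to the block `[a, b]`. -/
noncomputable def blockRestrict (X : ℕ → ℕ) (a b : ℕ) : ℕ → ℕ :=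
  fun j => X (a + j - 1) + 1 - sInf (X '' Set.Icc a b)

/-- `X ∈ S_n` is `k`-decomposable: `n = 1`, or `[n]` can be partitioned into at least 2
and at most `k` consecutive intervals, each a block of `X`, such that the permutation
order-isomorphic to the restriction of `X` to each block is again `k`-decomposable. -/
inductive KDecomposable (k : ℕ) : ℕ → (ℕ → ℕ) → Prop where
  | base : ∀ X : ℕ → ℕ, KDecomposable k 1 X
  | step : ∀ (n : ℕ) (X : ℕ → ℕ) (m : ℕ) (c : ℕ → ℕ),
      2 ≤ m → m ≤ k → c 0 = 1 → c m = n + 1 →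
      (∀ i < m, c i < c (i + 1)) →
      (∀ i < m, IsBlockOf n X (c i) (c (i + 1) - 1)) →
      (∀ i < m, KDecomposable k (c (i + 1) - c i) (blockRestrict X (c i) (c (i + 1) - 1))) →
      KDecomposable k n X

/-! ### Auxiliary lemmas about the Greedy run -/

noncomputable def gst (n : ℕ) (side : ℕ → ℕ → Prop) (X : ℕ → ℕ)
    (init : Finset (ℕ × ℤ)) (k : ℕ) : Finset (ℕ × ℤ) :=
  (List.range k).foldl (fun S t => greedyStep n side S (X (t + 1)) ((t : ℤ) + 1)) init

lemma greedyRun_eq_gst (n : ℕ) (side : ℕ → ℕ → Prop) (X : ℕ → ℕ)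
    (init : Finset (ℕ × ℤ)) : greedyRun n side X init = gst n side X init n := rfl

lemma gst_succ (n : ℕ) (side : ℕ → ℕ → Prop) (X : ℕ → ℕ)
    (init : Finset (ℕ × ℤ)) (k : ℕ) :
    gst n side X init (k + 1) =
      greedyStep n side (gst n side X init k) (X (k + 1)) ((k : ℤ) + 1) := by
  unfold gst
  rw [List.range_succ, List.foldl_append]
  rfl

lemma mem_greedyStep {n : ℕ} {side : ℕ → ℕ → Prop} {S : Finset (ℕ × ℤ)} {a : ℕ} {t : ℤ}
    {p : ℕ × ℤ} :
    p ∈ greedyStep n side S a t ↔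
      p = (a, t) ∨ p ∈ S ∨
        ∃ b ∈ Finset.Icc 1 n, side a b ∧ (S.filter (fun q => q.1 = b)).Nonempty ∧
          RectEmpty S (a, t) (b, tau S b) ∧ p = (b, t) := by
  unfold greedyStep
  simp only [Finset.mem_insert, Finset.mem_union, Finset.mem_image, Finset.mem_filter]
  constructor
  · rintro (h | h | ⟨b, ⟨hb1, hb2, hb3, hb4⟩, rfl⟩)
    · exact Or.inl h
    · exact Or.inr (Or.inl h)
    · exact Or.inr (Or.inr ⟨b, hb1, hb2, hb3, hb4, rfl⟩)
  · rintro (h | h | ⟨b, hb1, hb2, hb3, hb4, rfl⟩)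
    · exact Or.inl h
    · exact Or.inr (Or.inl h)
    · exact Or.inr (Or.inr ⟨b, ⟨hb1, hb2, hb3, hb4⟩, rfl⟩)

lemma subset_greedyStep (n : ℕ) (side : ℕ → ℕ → Prop) (S : Finset (ℕ × ℤ)) (a : ℕ)
    (t : ℤ) : S ⊆ greedyStep n side S a t := by
  intro p hp
  exact mem_greedyStep.2 (Or.inr (Or.inl hp))

lemma gst_mono (n : ℕ) (side : ℕ → ℕ → Prop) (X : ℕ → ℕ) (init : Finset (ℕ × ℤ))
    {j k : ℕ} (h : j ≤ k) : gst n side X init j ⊆ gst n side X init k := by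
  induction h with
  | refl => exact subset_rfl
  | step _ ih =>
      rename_i m _
      rw [gst_succ]
      exact ih.trans (subset_greedyStep _ _ _ _ _)

lemma gst_snd_le {n : ℕ} {side : ℕ → ℕ → Prop} {X : ℕ → ℕ} {init : Finset (ℕ × ℤ)}
    (h0 : ∀ p ∈ init, p.2 ≤ 0) :
    ∀ k, ∀ p ∈ gst n side X init k, p.2 ≤ (k : ℤ) := by
  intro k
  induction k with
  | zero => intro p hp; exact h0 p hp
  | succ k ih =>
      intro p hp
      rw [gst_succ] at hp
      rcases mem_greedyStep.1 hp with h | h | ⟨b, _, _, _, _, h⟩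
      · subst h; simp
      · have := ih p h; push_cast; omega
      · subst h; simp

lemma gst_mem_time {n : ℕ} {side : ℕ → ℕ → Prop} {X : ℕ → ℕ} {init : Finset (ℕ × ℤ)}
    (h0 : ∀ p ∈ init, p.2 ≤ 0) {b : ℕ} {t : ℤ} {m : ℕ}
    (hm : (b, t) ∈ gst n side X init m) (ht : 1 ≤ t) :
    t ≤ (m : ℤ) ∧ (b, t) ∈ gst n side X init t.toNat := by
  induction m with
  | zero => exact absurd (gst_snd_le h0 0 _ hm) (by simpa using by omega)
  | succ m ih =>
      rw [gst_succ] at hm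
      rcases mem_greedyStep.1 hm with h | h | ⟨b', hb1, hb2, hb3, hb4, h⟩
      · have ht' : t = (m : ℤ) + 1 := congrArg Prod.snd h
        have htn : t.toNat = m + 1 := by omega
        refine ⟨by omega, ?_⟩
        rw [htn, gst_succ]
        exact mem_greedyStep.2 (Or.inl h)
      · obtain ⟨h1, h2⟩ := ih h
        exact ⟨by push_cast; omega, h2⟩
      · have ht' : t = (m : ℤ) + 1 := congrArg Prod.snd h
        have htn : t.toNat = m + 1 := by omega
        refine ⟨by omega, ?_⟩
        rw [htn, gst_succ]
        exact mem_greedyStep.2 (Or.inr (Or.inr ⟨b', hb1, hb2, hb3, hb4, h⟩))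

lemma tau_mem_or (S : Finset (ℕ × ℤ)) (b : ℕ) : tau S b = 0 ∨ (b, tau S b) ∈ S := by
  unfold tau
  rcases Finset.eq_empty_or_nonempty ((S.filter (fun p => p.1 = b)).image Prod.snd) with
    h | h
  · left; simp [h]
  · right
    obtain ⟨m, hm⟩ := Finset.max_of_nonempty h
    rw [hm]
    have hmem := Finset.mem_of_max hm
    simp only [Finset.mem_image, Finset.mem_filter] at hmem
    obtain ⟨p, ⟨hpS, hpb⟩, hpm⟩ := hmem
    have : p = (b, m) := by
      cases p; simp_all
    rw [WithBot.unbotD_coe]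
    exact this ▸ hpS

lemma tau_le {S : Finset (ℕ × ℤ)} {b : ℕ} {c : ℤ} (hc : 0 ≤ c)
    (h : ∀ s : ℤ, (b, s) ∈ S → s ≤ c) : tau S b ≤ c := by
  rcases tau_mem_or S b with h0 | hmem
  · omega
  · exact h _ hmem

lemma initialSet_snd_le (T : BTree) (n : ℕ) : ∀ p ∈ initialSet T n, p.2 ≤ 0 := by
  intro p hp
  unfold initialSet at hp
  simp only [Finset.mem_biUnion, Finset.mem_image, Finset.mem_Icc] at hp
  obtain ⟨x, _, s, hs, rfl⟩ := hp
  exact hs.2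

/-- (`Cap` is a capture gadget for Greedy.) If the Greedy output on a
permutation `X` of `[n]` with initial tree `T` contains touch points `(x₁,t₁)`, `(x₃,t₁)`
and `(x₂,t₂)` with `1 ≤ t₁ < t₂` and `x₁ < x₂ < x₃`, then some access point lies in the
bounding box `[x₁,x₃] × [t₁,t₂]`. -/
theorem cap_is_capture_gadget (n : ℕ) (X : ℕ → ℕ) (hX : IsPermOn n X)
    (T : BTree) (hT : IsBSTOn T n)
    (G : Finset (ℕ × ℤ)) (hG : G = greedyRun n (fun _ _ => True) X (initialSet T n))
    (x₁ x₂ x₃ : ℕ) (t₁ t₂ : ℤ)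
    (h1 : (x₁, t₁) ∈ G) (h3 : (x₃, t₁) ∈ G) (h2 : (x₂, t₂) ∈ G)
    (ht1 : 1 ≤ t₁) (ht12 : t₁ < t₂) (hx12 : x₁ < x₂) (hx23 : x₂ < x₃) :
    ∃ s ∈ Finset.Icc 1 n, x₁ ≤ X s ∧ X s ≤ x₃ ∧ t₁ ≤ (s : ℤ) ∧ (s : ℤ) ≤ t₂ := by
  classical
  have h0 : ∀ p ∈ initialSet T n, p.2 ≤ 0 := initialSet_snd_le T n
  set f : ℕ → Finset (ℕ × ℤ) := gst n (fun _ _ => True) X (initialSet T n) with hf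
  have hGf : G = f n := hG
  -- the set of touch times of `x₂` in `(t₁, t₂]`
  set A : Finset ℤ :=
      (G.filter fun p => p.1 = x₂ ∧ t₁ < p.2 ∧ p.2 ≤ t₂).image Prod.snd with hA
  have hAne : t₂ ∈ A := by
    rw [hA]
    exact Finset.mem_image.2 ⟨(x₂, t₂), Finset.mem_filter.2 ⟨h2, rfl, ht12, le_refl _⟩, rfl⟩
  set t' : ℤ := A.min' ⟨t₂, hAne⟩ with ht'
  obtain ⟨p, hpmem, hpt⟩ := Finset.mem_image.1 (A.min'_mem ⟨t₂, hAne⟩)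
  obtain ⟨hpG, hpx, hpt1, hpt2⟩ := Finset.mem_filter.1 hpmem
  have hGt' : (x₂, t') ∈ G := by
    have : p = (x₂, t') := by cases p; simp_all
    exact this ▸ hpG
  have ht1t' : t₁ < t' := by rw [ht', ← hpt]; exact hpt1
  have ht't2 : t' ≤ t₂ := by rw [ht', ← hpt]; exact hpt2
  have hmin : ∀ s : ℤ, (x₂, s) ∈ G → t₁ < s → s ≤ t₂ → t' ≤ s := by
    intro s hs hs1 hs2
    exact A.min'_le s (Finset.mem_image.2 ⟨(x₂, s), Finset.mem_filter.2 ⟨hs, rfl, hs1, hs2⟩, rfl⟩)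
  -- locate the step at which `(x₂, t')` is created
  have hfmem : (x₂, t') ∈ f n := hGf ▸ hGt'
  have h1t' : (1 : ℤ) ≤ t' := by omega
  obtain ⟨ht'n, hmemk⟩ := gst_mem_time h0 hfmem h1t'
  have hkval : ((t'.toNat : ℕ) : ℤ) = t' := by omega
  obtain ⟨k', hk'⟩ : ∃ k', t'.toNat = k' + 1 := ⟨t'.toNat - 1, by omega⟩
  rw [hk', gst_succ] at hmemk
  have hkZ : ((k' : ℤ) + 1) = t' := by rw [← hkval, hk']; push_cast; omega
  have hkn : k' + 1 ≤ n := by omega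
  have husek : ∀ (y : ℕ), x₁ ≤ y → y ≤ x₃ → X (k' + 1) = y →
      ∃ s ∈ Finset.Icc 1 n, x₁ ≤ X s ∧ X s ≤ x₃ ∧ t₁ ≤ (s : ℤ) ∧ (s : ℤ) ≤ t₂ := by
    intro y hy1 hy3 hXy
    exact ⟨k' + 1, Finset.mem_Icc.2 ⟨by omega, by omega⟩, by omega, by omega,
      by omega, by omega⟩
  rcases mem_greedyStep.1 hmemk with hacc | hold | ⟨b, hbIcc, _, hbne, hre, heq⟩
  · -- `x₂` is the access at time `t'`
    have hx : x₂ = X (k' + 1) := congrArg Prod.fst hacc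
    exact husek x₂ (by omega) (by omega) hx.symm
  · -- impossible: the point would be older than `t'`
    have := gst_snd_le h0 k' _ hold
    simp only at this
    omega
  · -- `x₂` is touched at time `t'` by the access `X (k'+1)`
    have hb : b = x₂ := (congrArg Prod.fst heq).symm
    rw [hb] at hre
    set a : ℕ := X (k' + 1) with ha
    by_cases hrange : x₁ ≤ a ∧ a ≤ x₃
    · exact husek a hrange.1 hrange.2 rfl
    -- the access is outside `[x₁, x₃]`; derive a contradiction
    exfalso
    set τ : ℤ := tau (f k') x₂ with hτdef
    have hτ : τ ≤ t₁ := by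
      refine tau_le (by omega) ?_
      intro s hs
      by_contra hcon
      push_neg at hcon
      have hsG : (x₂, s) ∈ G := hGf ▸ gst_mono n _ X _ (by omega : k' ≤ n) hs
      have hsk : s ≤ (k' : ℤ) := gst_snd_le h0 k' _ hs
      have := hmin s hsG (by omega) (by omega)
      omega
    have hcase : a < x₁ ∨ x₃ < a := by omega
    -- the blocking point `(x₀, t₁)`
    set x₀ : ℕ := if a < x₁ then x₁ else x₃ with hx₀
    have hx0 : (a < x₁ ∧ x₀ = x₁) ∨ (x₃ < a ∧ x₀ = x₃) := by
      rcases hcase with hc | hc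
      · exact Or.inl ⟨hc, by rw [hx₀, if_pos hc]⟩
      · exact Or.inr ⟨hc, by rw [hx₀, if_neg (by omega)]⟩
    have hx₀G : (x₀, t₁) ∈ G := by
      rcases hx0 with ⟨_, h⟩ | ⟨_, h⟩ <;> rw [h] <;> assumption
    have hx₀mem : (x₀, t₁) ∈ f k' := by
      obtain ⟨_, hmem1⟩ := gst_mem_time h0 (hGf ▸ hx₀G : (x₀, t₁) ∈ f n) ht1
      exact gst_mono n _ X _ (by omega : t₁.toNat ≤ k') hmem1
    have hIn : InRect (a, (k' : ℤ) + 1) (x₂, τ) (x₀, t₁) := by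
      refine ⟨?_, ?_, ?_, ?_⟩ <;> dsimp only <;> omega
    rcases hre (x₀, t₁) hx₀mem hIn with h | h
    · have : t₁ = (k' : ℤ) + 1 := congrArg Prod.snd h
      omega
    · have : x₀ = x₂ := congrArg Prod.fst h
      omega
end

section
/- Let G_R be the output of GreedyRight on a permutation X of [n] with initial tree T. If G_R contains touch points (x_1, t_1) and (x_2, t_2) with 1 ≤ t_1 < t_2 and x_1 < x_2, then there is an access point (X(s), s) with x_1 ≤ X(s) ≤ x_2 and t_1 ≤ s ≤ t_2. (That is, the pattern (1,2) is a capture gadget for GreedyRight.) -/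
open scoped Classical

/-! ### Auxiliary development for Statement 17 -/

/-- The state of GreedyRight after `t` steps. -/
noncomputable def Raux (n : ℕ) (X : ℕ → ℕ) (init : Finset (ℕ × ℤ)) : ℕ → Finset (ℕ × ℤ)
  | 0 => init
  | t + 1 => greedyStep n (fun a b => a < b) (Raux n X init t) (X (t + 1)) ((t : ℤ) + 1)

lemma greedyRun_eq_Raux (n : ℕ) (X : ℕ → ℕ) (init : Finset (ℕ × ℤ)) :
    greedyRun n (fun a b => a < b) X init = Raux n X init n := by
  have h : ∀ t : ℕ, (List.range t).foldl
      (fun S u => greedyStep n (fun a b => a < b) S (X (u + 1)) ((u : ℤ) + 1)) init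
      = Raux n X init t := by
    intro t
    induction t with
    | zero => rfl
    | succ t ih => rw [List.range_succ, List.foldl_append, ih]; rfl
  exact h n

lemma Raux_subset_succ (n : ℕ) (X : ℕ → ℕ) (init : Finset (ℕ × ℤ)) (t : ℕ) :
    Raux n X init t ⊆ Raux n X init (t + 1) := by
  intro p hp
  simp only [Raux, greedyStep, Finset.mem_insert, Finset.mem_union]
  tauto

lemma Raux_mono (n : ℕ) (X : ℕ → ℕ) (init : Finset (ℕ × ℤ)) {a b : ℕ} (h : a ≤ b) :
    Raux n X init a ⊆ Raux n X init b := by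
  induction b, h using Nat.le_induction with
  | base => exact subset_rfl
  | succ b hb ih => exact ih.trans (Raux_subset_succ n X init b)

lemma Raux_time_le (n : ℕ) (X : ℕ → ℕ) (init : Finset (ℕ × ℤ))
    (hinit : ∀ p ∈ init, p.2 ≤ 0) :
    ∀ t : ℕ, ∀ p ∈ Raux n X init t, p.2 ≤ (t : ℤ) := by
  intro t
  induction t with
  | zero => intro p hp; exact (hinit p hp).trans (by norm_num)
  | succ t ih =>
    intro p hp
    simp only [Raux, greedyStep, Finset.mem_insert, Finset.mem_union, Finset.mem_image] at hp
    rcases hp with h | h | ⟨b, -, h⟩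
    · subst h; push_cast; omega
    · have := ih p h; push_cast at this ⊢; omega
    · rw [← h]; push_cast; omega

lemma tau_spec {S : Finset (ℕ × ℤ)} {b : ℕ}
    (h : (S.filter (fun p => p.1 = b)).Nonempty) :
    (b, tau S b) ∈ S ∧ ∀ p ∈ S, p.1 = b → p.2 ≤ tau S b := by
  have himg : ((S.filter (fun p => p.1 = b)).image Prod.snd).Nonempty := h.image _
  have hmax : tau S b = ((S.filter (fun p => p.1 = b)).image Prod.snd).max' himg := by
    unfold tau
    rw [← Finset.coe_max' himg]
    rfl
  constructor
  · have hm := Finset.max'_mem _ himg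
    rw [Finset.mem_image] at hm
    obtain ⟨p, hp, hp2⟩ := hm
    rw [Finset.mem_filter] at hp
    have : p = (b, tau S b) := by
      rw [hmax]
      exact Prod.ext hp.2 hp2
    rw [← this]; exact hp.1
  · intro p hp hp1
    rw [hmax]
    exact Finset.le_max' _ _ (Finset.mem_image.mpr ⟨p, Finset.mem_filter.mpr ⟨hp, hp1⟩, rfl⟩)

lemma Raux_mem_struct (n : ℕ) (X : ℕ → ℕ) (init : Finset (ℕ × ℤ))
    (hinit : ∀ p ∈ init, p.2 ≤ 0) :
    ∀ t : ℕ, ∀ p ∈ Raux n X init t, 1 ≤ p.2 →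
      ∃ s : ℕ, 1 ≤ s ∧ s ≤ t ∧ p.2 = (s : ℤ) ∧ p ∈ Raux n X init s ∧
        (p.1 = X s ∨ (p.1 ∈ Finset.Icc 1 n ∧ X s < p.1 ∧
          ((Raux n X init (s - 1)).filter (fun q => q.1 = p.1)).Nonempty ∧
          RectEmpty (Raux n X init (s - 1)) (X s, (s : ℤ))
            (p.1, tau (Raux n X init (s - 1)) p.1))) := by
  intro t
  induction t with
  | zero => intro p hp h1; exact absurd (hinit p hp) (by omega)
  | succ t ih =>
    intro p hp h1
    have hp' := hp
    simp only [Raux, greedyStep, Finset.mem_insert, Finset.mem_union, Finset.mem_image,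
      Finset.mem_filter] at hp'
    rcases hp' with h | h | ⟨b, ⟨hbI, hside, hne, hre⟩, h⟩
    · refine ⟨t + 1, by omega, le_refl _, ?_, hp, Or.inl ?_⟩
      · rw [h]; push_cast; ring
      · rw [h]
    · obtain ⟨s, hs1, hst, hseq, hmem, hcase⟩ := ih p h h1
      exact ⟨s, hs1, by omega, hseq, hmem, hcase⟩
    · refine ⟨t + 1, by omega, le_refl _, ?_, hp, Or.inr ?_⟩
      · rw [← h]; push_cast; ring
      · rw [← h]
        simp only [Nat.add_sub_cancel]
        exact ⟨hbI, hside, hne, hre⟩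

/-- (The pattern (1,2) is a capture gadget for GreedyRight.) If the
GreedyRight output on a permutation `X` of `[n]` with initial tree `T` contains touch points
`(x₁,t₁)` and `(x₂,t₂)` with `1 ≤ t₁ < t₂` and `x₁ < x₂`, then some access point lies in the
bounding box `[x₁,x₂] × [t₁,t₂]`. -/
theorem pattern12_is_capture_gadget_greedyRight (n : ℕ) (X : ℕ → ℕ) (hX : IsPermOn n X)
    (T : BTree) (hT : IsBSTOn T n)
    (G : Finset (ℕ × ℤ)) (hG : G = greedyRun n (fun a b => a < b) X (initialSet T n))
    (x₁ x₂ : ℕ) (t₁ t₂ : ℤ)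
    (h1 : (x₁, t₁) ∈ G) (h2 : (x₂, t₂) ∈ G)
    (ht1 : 1 ≤ t₁) (ht12 : t₁ < t₂) (hx12 : x₁ < x₂) :
    ∃ s ∈ Finset.Icc 1 n, x₁ ≤ X s ∧ X s ≤ x₂ ∧ t₁ ≤ (s : ℤ) ∧ (s : ℤ) ≤ t₂ := by
  have hinit : ∀ p ∈ initialSet T n, p.2 ≤ 0 := by
    intro p hp
    simp only [initialSet, Finset.mem_biUnion, Finset.mem_image, Finset.mem_Icc] at hp
    obtain ⟨x, -, s, hs, rfl⟩ := hp
    exact hs.2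
  rw [greedyRun_eq_Raux] at hG
  subst hG
  -- (x₁, t₁) is present from time t₁ on
  obtain ⟨s₁, hs₁1, hs₁n, hs₁eq, hmem₁, -⟩ :=
    Raux_mem_struct n X _ hinit n (x₁, t₁) h1 (by simpa using ht1)
  simp only at hs₁eq hmem₁
  -- strong induction on t₂
  suffices H : ∀ k : ℕ, ∀ t₂' : ℤ, t₂'.toNat = k →
      (x₂, t₂') ∈ Raux n X (initialSet T n) n → t₁ < t₂' →
      ∃ s ∈ Finset.Icc 1 n, x₁ ≤ X s ∧ X s ≤ x₂ ∧ t₁ ≤ (s : ℤ) ∧ (s : ℤ) ≤ t₂' by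
    exact H t₂.toNat t₂ rfl h2 ht12
  intro k
  induction k using Nat.strong_induction_on with
  | _ k IH =>
    intro t₂' hk hmem hlt
    obtain ⟨s, hs1, hsn, hseq, hmemS, hcase⟩ :=
      Raux_mem_struct n X _ hinit n (x₂, t₂') hmem (by omega)
    simp only at hseq hcase
    rcases hcase with hacc | ⟨hbIcc, hXlt, hne, hre⟩
    · exact ⟨s, Finset.mem_Icc.mpr ⟨hs1, hsn⟩, by omega, by omega, by omega, by omega⟩
    · by_cases hx1 : x₁ ≤ X s
      · exact ⟨s, Finset.mem_Icc.mpr ⟨hs1, hsn⟩, hx1, le_of_lt hXlt, by omega, by omega⟩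
      push_neg at hx1
      obtain ⟨htauMem, htauLe⟩ := tau_spec hne
      set τ : ℤ := tau (Raux n X (initialSet T n) (s - 1)) x₂ with hτ
      have hτle : τ ≤ (s : ℤ) - 1 := by
        have := Raux_time_le n X _ hinit (s - 1) _ htauMem
        simp only at this
        omega
      -- (x₁, t₁) ∈ R (s-1)
      have hm1 : (x₁, t₁) ∈ Raux n X (initialSet T n) (s - 1) :=
        Raux_mono n X _ (by omega : s₁ ≤ s - 1) hmem₁
      -- the rectangle forces t₁ < τ
      have hτgt : t₁ < τ := by
        by_contra hcon
        push_neg at hcon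
        have hIn : InRect ((X s : ℕ), (s : ℤ)) (x₂, τ) (x₁, t₁) := by
          refine ⟨?_, ?_, ?_, ?_⟩ <;> simp only [min_def, max_def] <;> split <;> omega
        rcases hre (x₁, t₁) hm1 hIn with h | h
        · have := congrArg Prod.snd h
          simp only at this
          omega
        · have := congrArg Prod.fst h
          simp only at this
          omega
      -- recurse on (x₂, τ)
      have hmemτ : (x₂, τ) ∈ Raux n X (initialSet T n) n :=
        Raux_mono n X _ (by omega : s - 1 ≤ n) htauMem
      obtain ⟨s', hs'I, hA, hB, hC, hD⟩ := IH τ.toNat (by omega) τ (by omega) hmemτ hτgt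
      exact ⟨s', hs'I, hA, hB, hC, by omega⟩
end

section
/- Let ℓ ≥ 1 and consider the 'perturbed grid' point set P = {(i·ℓ + (j−1), j·ℓ + (i−1)) : i, j ∈ [ℓ]} ⊆ ℤ². Then no two distinct points of P share an x-coordinate or a y-coordinate (so P is the point set of a permutation of an ℓ²-element set), and for every m ≤ ℓ and every permutation π ∈ S_m there exist points p_1, …, p_m ∈ P with strictly increasing y-coordinates whose x-coordinates realize π, i.e. for all r, s ∈ [m], p_r has smaller x-coordinate than p_s if and only if π(r) < π(s). In particular, P contains every permutation pattern of size at most ℓ. -/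
open scoped Classical

/-- The perturbed grid `{(i·ℓ + (j−1), j·ℓ + (i−1)) : i, j ∈ [ℓ]}`. -/
def pgrid (l : ℕ) : Finset (ℤ × ℤ) :=
  ((Finset.Icc 1 l) ×ˢ (Finset.Icc 1 l)).image fun ij =>
    ((ij.1 : ℤ) * (l : ℤ) + (ij.2 : ℤ) - 1, (ij.2 : ℤ) * (l : ℤ) + (ij.1 : ℤ) - 1)

lemma pgrid_key (l a b c d : ℕ) (hb : b ≤ l) (hd : 1 ≤ d) (h : a < c) :
    a * l + b < c * l + d := by
  have h1 : (a + 1) * l ≤ c * l := Nat.mul_le_mul_right l (by omega)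
  have : a * l + b ≤ (a + 1) * l := by nlinarith
  omega

lemma pgrid_eqkey (l a b c d : ℕ) (hb1 : 1 ≤ b) (hb : b ≤ l) (hd1 : 1 ≤ d) (hd : d ≤ l)
    (h : a * l + b = c * l + d) : a = c ∧ b = d := by
  rcases lt_trichotomy a c with hc | hc | hc
  · have := pgrid_key l a b c d hb hd1 hc; omega
  · subst hc; omega
  · have := pgrid_key l c d a b hd hb1 hc; omega

/-- The perturbed grid has pairwise distinct x- and y-coordinates, and it
contains every permutation pattern of size at most `ℓ`. -/
theorem pgrid_contains_all_patterns (l : ℕ) (hl : 1 ≤ l) :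
    (∀ p ∈ pgrid l, ∀ q ∈ pgrid l, p ≠ q → p.1 ≠ q.1 ∧ p.2 ≠ q.2) ∧
    (∀ m : ℕ, m ≤ l → ∀ pat : ℕ → ℕ, IsPermOn m pat →
      ∃ f : ℕ → ℤ × ℤ,
        (∀ r ∈ Set.Icc 1 m, f r ∈ pgrid l) ∧
        (∀ r ∈ Set.Icc 1 m, ∀ s ∈ Set.Icc 1 m, r < s → (f r).2 < (f s).2) ∧
        (∀ r ∈ Set.Icc 1 m, ∀ s ∈ Set.Icc 1 m, ((f r).1 < (f s).1 ↔ pat r < pat s))) := by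
  constructor
  · rintro p hp q hq hne
    simp only [pgrid, Finset.mem_image, Finset.mem_product, Finset.mem_Icc] at hp hq
    obtain ⟨⟨i, j⟩, ⟨⟨hi1, hi2⟩, hj1, hj2⟩, rfl⟩ := hp
    obtain ⟨⟨i', j'⟩, ⟨⟨hi'1, hi'2⟩, hj'1, hj'2⟩, rfl⟩ := hq
    constructor
    · intro h
      simp only at h
      have h' : i * l + j = i' * l + j' := by
        have : ((i * l + j : ℕ) : ℤ) = ((i' * l + j' : ℕ) : ℤ) := by push_cast; linarith
        exact_mod_cast this
      obtain ⟨rfl, rfl⟩ := pgrid_eqkey l i j i' j' hj1 hj2 hj'1 hj'2 h'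
      exact hne rfl
    · intro h
      simp only at h
      have h' : j * l + i = j' * l + i' := by
        have : ((j * l + i : ℕ) : ℤ) = ((j' * l + i' : ℕ) : ℤ) := by push_cast; linarith
        exact_mod_cast this
      obtain ⟨rfl, rfl⟩ := pgrid_eqkey l j i j' i' hi1 hi2 hi'1 hi'2 h'
      exact hne rfl
  · intro m hm pat hpat
    refine ⟨fun r => ((pat r : ℤ) * l + r - 1, (r : ℤ) * l + pat r - 1), ?_, ?_, ?_⟩
    · intro r hr
      simp only [Set.mem_Icc] at hr
      have hpr := hpat.mapsTo hr
      simp only [Set.mem_Icc] at hpr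
      simp only [pgrid, Finset.mem_image, Finset.mem_product, Finset.mem_Icc]
      exact ⟨(pat r, r), ⟨⟨hpr.1, hpr.2.trans hm⟩, hr.1, hr.2.trans hm⟩, rfl⟩
    · intro r hr s hs hrs
      simp only [Set.mem_Icc] at hr hs
      have hpr := hpat.mapsTo hr
      have hps := hpat.mapsTo hs
      simp only [Set.mem_Icc] at hpr hps
      have h : r * l + pat r < s * l + pat s :=
        pgrid_key l r (pat r) s (pat s) (hpr.2.trans hm) hps.1 hrs
      have : ((r * l + pat r : ℕ) : ℤ) < ((s * l + pat s : ℕ) : ℤ) := by exact_mod_cast h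
      push_cast at this
      simp only
      linarith
    · intro r hr s hs
      simp only [Set.mem_Icc] at hr hs
      have hpr := hpat.mapsTo hr
      have hps := hpat.mapsTo hs
      simp only [Set.mem_Icc] at hpr hps
      simp only
      constructor
      · intro hx
        by_contra hps'
        push_neg at hps'
        rcases eq_or_lt_of_le hps' with heq | hlt
        · have : r = s := hpat.injOn hr hs heq.symm
          subst this
          exact lt_irrefl _ hx
        · have h : pat s * l + s < pat r * l + r :=
            pgrid_key l (pat s) s (pat r) r (hs.2.trans hm) hr.1 hlt
          have : ((pat s * l + s : ℕ) : ℤ) < ((pat r * l + r : ℕ) : ℤ) := by exact_mod_cast h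
          push_cast at this
          linarith
      · intro hlt
        have h : pat r * l + r < pat s * l + s :=
          pgrid_key l (pat r) r (pat s) s (hr.2.trans hm) hs.1 hlt
        have : ((pat r * l + r : ℕ) : ℤ) < ((pat s * l + s : ℕ) : ℤ) := by exact_mod_cast h
        push_cast at this
        linarith
end

section
/- Let X ∈ S_n be a preorder sequence, i.e. a permutation avoiding the pattern (2,3,1). For a ∈ [n] write t_a = X^{-1}(a) for its access time, and let L_a be the maximal set of consecutive times t_a+1, t_a+2, …, t_a+ℓ_a (for some ℓ_a ≥ 0) such that every element accessed at these times is smaller than a. Define wing_L(a) = { b ∈ [n] : t_b ∈ {t_a+1, …, t_a+ℓ_a} and the closed axis-parallel rectangle with corners (b, t_b) and (a, t_a) contains no access point (X(s), s) other than these two }. Then the sets wing_L(a), for a ∈ [n], are pairwise disjoint. -/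
open scoped Classical

/-- `b ∈ wing_L(a)`: there are access times `t_a < t_b` with `X t_a = a`, `X t_b = b`, every
element accessed at times in `(t_a, t_b]` is smaller than `a` (so `t_b` lies in the maximal
run `L_a`), and the closed rectangle with corners `(b, t_b)` and `(a, t_a)` contains no
other access point. -/
def WingL (n : ℕ) (X : ℕ → ℕ) (a b : ℕ) : Prop :=
  b ∈ Finset.Icc 1 n ∧
  ∃ ta tb : ℕ, ta ∈ Finset.Icc 1 n ∧ tb ∈ Finset.Icc 1 n ∧
    X ta = a ∧ X tb = b ∧ ta < tb ∧
    (∀ s ∈ Finset.Icc 1 n, ta < s → s ≤ tb → X s < a) ∧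
    (∀ s ∈ Finset.Icc 1 n, b ≤ X s → X s ≤ a → ta ≤ s → s ≤ tb → s = ta ∨ s = tb)

/-- For a preorder sequence `X ∈ S_n` (a (2,3,1)-avoiding permutation),
the left wings `wing_L(a)`, `a ∈ [n]`, are pairwise disjoint. -/
theorem wingL_pairwise_disjoint (n : ℕ) (X : ℕ → ℕ) (hX : IsPermOn n X)
    (havoid : Avoids n X 3 pat231)
    (a a' b : ℕ) (ha : a ∈ Finset.Icc 1 n) (ha' : a' ∈ Finset.Icc 1 n)
    (hb : WingL n X a b) (hb' : WingL n X a' b) : a = a' := by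
  obtain ⟨hbmem, ta, tb, hta, htb, hXta, hXtb, hlt, hrun, hrect⟩ := hb
  obtain ⟨_, ta', tb', hta', htb', hXta', hXtb', hlt', hrun', hrect'⟩ := hb'
  have hmem : ∀ t, t ∈ Finset.Icc 1 n → t ∈ Set.Icc 1 n := fun t ht => by simpa using ht
  have htbeq : tb = tb' :=
    hX.injOn (hmem _ htb) (hmem _ htb') (by rw [hXtb, hXtb'])
  subst htbeq
  have hba : b < a := by rw [← hXtb]; exact hrun tb htb hlt le_rfl
  have hba' : b < a' := by rw [← hXtb']; exact hrun' tb htb' hlt' le_rfl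
  rcases lt_trichotomy ta ta' with h | h | h
  · have h1 : X ta' < a := hrun ta' hta' h hlt'.le
    rcases hrect ta' hta' (by rw [hXta']; exact hba'.le) h1.le h.le hlt'.le with h2 | h2
    · rw [← hXta, ← hXta', h2]
    · exact absurd (h2 ▸ hXta' : X tb = a') (by rw [hXtb']; exact hba'.ne)
  · rw [← hXta, ← hXta', h]
  · have h1 : X ta < a' := hrun' ta hta h hlt.le
    rcases hrect' ta hta (by rw [hXta]; exact hba.le) h1.le h.le hlt.le with h2 | h2
    · rw [← hXta, ← hXta', h2]
    · exact absurd (h2 ▸ hXta : X tb = a) (by rw [hXtb]; exact hba.ne)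
end
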